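/- Let α, β, δ₁ ∈ (−1, ∞) and κ₁ ∈ ℕ. Then for every z ∈ ℂ with |z| < 1 and every n ∈ ℤ₊, 𝒫_n(z; α, β, δ₁, κ₁) = (Γ(κ₁+δ₁+1)/(Γ(δ₁+1)Γ(κ₁))) ∫₀¹ t^{δ₁} (1−t)^{κ₁−1} J_n(zt; α, β) dt, where J_n(x; α, β) = ₂F₁(−n, n+α+β+1; α+1; x) is the Jacobi polynomial in hypergeometric form. -/

import Mathlib

/-!
Expanding `J_n` into its `n + 1` monomials turns the integral into a finite sum of beta integrals
`∫₀¹ t^{δ₁+k} (1-t)^{κ₁-1} dt = B(δ₁+1+k, κ₁) = Γ(δ₁+1+k) Γ(κ₁) / Γ(κ₁+δ₁+1+k)`.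
Since `Γ(a+k) = (a)_k Γ(a)`, the Gamma prefactor turns the `k`-th one into
`(δ₁+1)_k / (κ₁+δ₁+1)_k`, which is exactly the extra factor of the `₃F₂` coefficient.
-/

/-- Pochhammer symbol `(c)_k = c (c+1) ⋯ (c+k-1)`. -/
noncomputable def poch (c : ℂ) (k : ℕ) : ℂ := ∏ j ∈ Finset.range k, (c + j)

/-- The polynomial `𝒫_n(x;α,β,δ₁,κ₁) = ₃F₂(-n, n+α+β+1, δ₁+1; α+1, κ₁+δ₁+1; x)`. -/
noncomputable def calP1 (α β δ₁ : ℝ) (κ₁ : ℕ) (n : ℕ) (x : ℂ) : ℂ :=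
  ∑' k : ℕ, poch (-(n : ℂ)) k * poch ((n : ℂ) + α + β + 1) k *
      poch ((δ₁ : ℂ) + 1) k /
      (poch ((α : ℂ) + 1) k * poch ((κ₁ : ℂ) + (δ₁ : ℂ) + 1) k) *
      x ^ k / (Nat.factorial k)

/-- The Jacobi polynomial `J_n(x;α,β) = ₂F₁(-n, n+α+β+1; α+1; x)`. -/
noncomputable def J (α β : ℝ) (n : ℕ) (x : ℂ) : ℂ :=
  ∑' k : ℕ, poch (-(n : ℂ)) k * poch ((n : ℂ) + α + β + 1) k /
      poch ((α : ℂ) + 1) k * x ^ k / (Nat.factorial k)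

open Finset

lemma poch_neg_natCast_eq_zero {n k : ℕ} (h : n < k) : poch (-(n : ℂ)) k = 0 :=
  prod_eq_zero (mem_range.mpr h) (by simp)

lemma Gamma_add_nat_eq_poch_mul {a : ℂ} (ha : 0 < a.re) (k : ℕ) :
    Complex.Gamma (a + k) = poch a k * Complex.Gamma a := by
  induction k with
  | zero => simp [poch]
  | succ k ih =>
    have hne : a + k ≠ 0 := fun h => by
      have := congrArg Complex.re h
      simp only [Complex.add_re, Complex.natCast_re, Complex.zero_re] at this
      linarith [k.cast_nonneg (α := ℝ)]
    rw [Nat.cast_succ, ← add_assoc, Complex.Gamma_add_one _ hne, ih, poch, poch, prod_range_succ]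
    ring

lemma Gamma_ratio_mul_betaIntegral {a c : ℂ} (ha : 0 < a.re) (hc : 0 < c.re) (k : ℕ) :
    Complex.Gamma (a + c) / (Complex.Gamma a * Complex.Gamma c) *
      Complex.betaIntegral (a + k) c = poch a k / poch (a + c) k := by
  have hak : 0 < (a + k).re := by simp only [Complex.add_re, Complex.natCast_re]; positivity
  have hac : 0 < (a + c).re := by simp only [Complex.add_re]; positivity
  have hack : 0 < (a + c + k).re := by simp only [Complex.add_re, Complex.natCast_re] at *; positivity
  have hΓa := Complex.Gamma_ne_zero_of_re_pos ha
  have hΓc := Complex.Gamma_ne_zero_of_re_pos hc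
  have hΓac := Complex.Gamma_ne_zero_of_re_pos hac
  have hpoch : poch (a + c) k ≠ 0 :=
    left_ne_zero_of_mul (Gamma_add_nat_eq_poch_mul hac k ▸ Complex.Gamma_ne_zero_of_re_pos hack)
  have hbeta := Complex.Gamma_mul_Gamma_eq_betaIntegral hak hc
  rw [add_right_comm, Gamma_add_nat_eq_poch_mul hac, Gamma_add_nat_eq_poch_mul ha] at hbeta
  field_simp
  linear_combination -hbeta

noncomputable def jacobiCoeff (α β : ℝ) (n k : ℕ) : ℂ :=
  poch (-(n : ℂ)) k * poch ((n : ℂ) + α + β + 1) k / poch ((α : ℂ) + 1) k / k.factorial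

lemma J_eq_sum (α β : ℝ) (n : ℕ) (x : ℂ) :
    J α β n x = ∑ k ∈ range (n + 1), jacobiCoeff α β n k * x ^ k := by
  rw [J, tsum_eq_sum (s := range (n + 1)) fun k hk => by
    rw [poch_neg_natCast_eq_zero (by simpa using hk)]; ring]
  exact sum_congr rfl fun k _ => by rw [jacobiCoeff]; ring

lemma calP1_eq_sum (α β δ₁ : ℝ) (κ₁ n : ℕ) (x : ℂ) :
    calP1 α β δ₁ κ₁ n x = ∑ k ∈ range (n + 1), jacobiCoeff α β n k * x ^ k *
      (poch ((δ₁ : ℂ) + 1) k / poch ((κ₁ : ℂ) + δ₁ + 1) k) := by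
  rw [calP1, tsum_eq_sum (s := range (n + 1)) fun k hk => by
    rw [poch_neg_natCast_eq_zero (by simpa using hk)]; ring]
  exact sum_congr rfl fun k _ => by rw [jacobiCoeff]; ring

lemma intervalIntegrable_rpow_mul_one_sub_pow_mul_pow {δ : ℝ} (hδ : -1 < δ) (m k : ℕ) :
    IntervalIntegrable (fun t : ℝ => ((t ^ δ : ℝ) : ℂ) * (((1 - t) ^ m : ℝ) : ℂ) * (t : ℂ) ^ k)
      MeasureTheory.volume 0 1 := by
  have hrpow := intervalIntegral.intervalIntegrable_rpow' (a := 0) (b := 1) hδ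
  simp_rw [mul_assoc]
  exact IntervalIntegrable.mul_continuousOn ⟨hrpow.1.ofReal, hrpow.2.ofReal⟩ (by fun_prop)

lemma integral_rpow_mul_one_sub_pow_mul_pow (δ : ℝ) {κ : ℕ} (hκ : 1 ≤ κ) (k : ℕ) :
    ∫ t in (0 : ℝ)..1, ((t ^ δ : ℝ) : ℂ) * (((1 - t) ^ (κ - 1) : ℝ) : ℂ) * (t : ℂ) ^ k =
      Complex.betaIntegral ((δ : ℂ) + 1 + k) κ := by
  rw [Complex.betaIntegral, intervalIntegral.integral_of_le zero_le_one,
    intervalIntegral.integral_of_le zero_le_one]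
  refine MeasureTheory.setIntegral_congr_fun measurableSet_Ioc fun t ht => ?_
  have ht0 : (t : ℂ) ≠ 0 := Complex.ofReal_ne_zero.mpr ht.1.ne'
  have hκ' : (κ : ℂ) - 1 = ((κ - 1 : ℕ) : ℂ) := by push_cast [Nat.cast_sub hκ]; ring
  rw [show (δ : ℂ) + 1 + k - 1 = δ + k by ring, Complex.cpow_add _ _ ht0, Complex.cpow_natCast,
    hκ', Complex.cpow_natCast, Complex.ofReal_cpow ht.1.le]
  push_cast
  ring

theorem stmt_8_general (α β δ₁ : ℝ) (hδ₁ : -1 < δ₁)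
    (κ₁ : ℕ) (hκ₁ : 1 ≤ κ₁) (z : ℂ) (n : ℕ) :
    calP1 α β δ₁ κ₁ n z =
      ((Real.Gamma ((κ₁ : ℝ) + δ₁ + 1) /
          (Real.Gamma (δ₁ + 1) * Real.Gamma (κ₁ : ℝ)) : ℝ) : ℂ) *
        ∫ t in (0:ℝ)..1,
          ((t ^ δ₁ : ℝ) : ℂ) * (((1 - t) ^ (κ₁ - 1) : ℝ) : ℂ) * J α β n (z * t) := by
  set w : ℝ → ℂ := fun t => ((t ^ δ₁ : ℝ) : ℂ) * (((1 - t) ^ (κ₁ - 1) : ℝ) : ℂ)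
  have hexpand : ∀ t : ℝ, w t * J α β n (z * t) =
      ∑ k ∈ range (n + 1), jacobiCoeff α β n k * z ^ k * (w t * (t : ℂ) ^ k) := fun t => by
    rw [J_eq_sum, mul_sum]
    exact sum_congr rfl fun k _ => by ring
  have hswap : (κ₁ : ℂ) + δ₁ + 1 = δ₁ + 1 + κ₁ := by ring
  have hprefactor : ((Real.Gamma ((κ₁ : ℝ) + δ₁ + 1) /
      (Real.Gamma (δ₁ + 1) * Real.Gamma (κ₁ : ℝ)) : ℝ) : ℂ) =
      Complex.Gamma ((δ₁ + 1 : ℂ) + κ₁) / (Complex.Gamma (δ₁ + 1) * Complex.Gamma κ₁) := by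
    push_cast [← Complex.Gamma_ofReal]
    rw [hswap]
  rw [calP1_eq_sum, intervalIntegral.integral_congr fun t _ => hexpand t,
    intervalIntegral.integral_finsetSum fun k _ =>
      (intervalIntegrable_rpow_mul_one_sub_pow_mul_pow hδ₁ _ k).const_mul _, mul_sum]
  refine sum_congr rfl fun k _ => ?_
  have hre_δ : 0 < ((δ₁ : ℂ) + 1).re := by simpa using neg_lt_iff_pos_add.mp hδ₁
  have hre_κ : 0 < (κ₁ : ℂ).re := by simpa using Nat.one_pos.trans_le hκ₁
  rw [intervalIntegral.integral_const_mul, integral_rpow_mul_one_sub_pow_mul_pow δ₁ hκ₁,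
    mul_left_comm, hprefactor, Gamma_ratio_mul_betaIntegral hre_δ hre_κ, hswap]

theorem stmt_8 (α β δ₁ : ℝ) (hα : -1 < α) (hβ : -1 < β) (hδ₁ : -1 < δ₁)
    (κ₁ : ℕ) (hκ₁ : 1 ≤ κ₁) (z : ℂ) (hz : ‖z‖ < 1) (n : ℕ) :
    calP1 α β δ₁ κ₁ n z =
      ((Real.Gamma ((κ₁ : ℝ) + δ₁ + 1) /
          (Real.Gamma (δ₁ + 1) * Real.Gamma (κ₁ : ℝ)) : ℝ) : ℂ) *
        ∫ t in (0:ℝ)..1,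
          ((t ^ δ₁ : ℝ) : ℂ) * (((1 - t) ^ (κ₁ - 1) : ℝ) : ℂ) * J α β n (z * t) :=
  stmt_8_general α β δ₁ hδ₁ κ₁ hκ₁ z n
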